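/- arXiv:1711.05981 — 5 statements merged into one kernel-verified Lean document; each statement's English description precedes it below -/
import Mathlib

section
/- The operator C_q on ℓ²(ℤ₊) satisfies C_q² = (1-q²) · Σ_{n=0}^∞ q^{2n} S^{n+1}(S*)^{n+1}, where the series converges in operator norm; consequently C_q lies in the C*-algebra generated by S. -/
/-- ℓ²(ℤ₊) -/
noncomputable abbrev L2 : Type := lp (fun _ : ℕ => ℂ) 2

/-- standard basis vector e_n -/
noncomputable def e (n : ℕ) : L2 := lp.single 2 n 1

/-!
`S ^ (n + 1) * (S*) ^ (n + 1)` is the orthogonal projection onto the span of the `e k` with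
`k > n`, so everything in sight is diagonal in the basis `(e k)`. On `e k` the series is
`(1 - q²) ∑_{n < k} q^{2n} = 1 - q^{2k}`, the eigenvalue of `C_q²`, and its terms have norm at
most `q^{2n}`. For the membership, a diagonal operator whose diagonal `d` is Cauchy is the
norm limit of the telescoping combinations `d 0 • 1 + ∑_{n < N} (d (n+1) - d n) • S^{n+1}(S*)^{n+1}`,
whose diagonal is `d (min N k)`.
-/

open ContinuousLinearMap Filter Finset Topology
open scoped ENNReal

local notation "⟪" x ", " y "⟫" => @inner ℂ _ _ x y

namespace ShiftDiagonal

lemma inner_e_left (f : L2) (k : ℕ) : ⟪e k, f⟫ = f k := by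
  simp [e, lp.inner_single_left]

lemma inner_e_e (k n : ℕ) : ⟪e k, e n⟫ = if k = n then 1 else 0 := by
  rw [inner_e_left]
  rcases eq_or_ne k n with rfl | h
  · simp [e]
  · simp [e, h]

lemma ext_inner_e {f g : L2} (h : ∀ k, ⟪e k, f⟫ = ⟪e k, g⟫) : f = g :=
  lp.ext <| funext fun k => by simpa only [inner_e_left] using h k

lemma dense_span_e : Dense (Submodule.span ℂ (Set.range e) : Set L2) := by
  intro f
  refine mem_closure_of_tendsto (lp.hasSum_single ENNReal.ofNat_ne_top f)
    (Eventually.of_forall fun s => Submodule.sum_mem _ fun i _ => ?_)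
  have hsingle : lp.single 2 i (f i) = f i • e i := by
    rw [e, ← lp.single_smul, smul_eq_mul, mul_one]
  rw [hsingle]
  exact Submodule.smul_mem _ _ (Submodule.subset_span ⟨i, rfl⟩)

lemma ext_e {F : Type*} [NormedAddCommGroup F] [NormedSpace ℂ F] {A B : L2 →L[ℂ] F}
    (h : ∀ n, A (e n) = B (e n)) : A = B :=
  ext_on dense_span_e (by rintro x ⟨n, rfl⟩; exact h n)

section Diagonal

variable {T : L2 →L[ℂ] L2} {d : ℕ → ℂ}

lemma apply_of_diagonal (hT : ∀ n, T (e n) = d n • e n) (x : L2) (k : ℕ) :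
    T x k = d k * x k := by
  have hcoord : (innerSL ℂ (e k)).comp T = d k • innerSL ℂ (e k) := by
    refine ext_e fun n => ?_
    rcases eq_or_ne k n with rfl | h <;> simp [inner_e_e, *]
  simpa only [comp_apply, smul_apply, innerSL_apply_apply, smul_eq_mul, inner_e_left] using
    congr($hcoord x)

lemma norm_le_of_diagonal (hT : ∀ n, T (e n) = d n • e n) {M : ℝ} (hM : 0 ≤ M)
    (hd : ∀ n, ‖d n‖ ≤ M) : ‖T‖ ≤ M := by
  refine opNorm_le_bound _ hM fun x => ?_
  have hp : (0 : ℝ) < (2 : ℝ≥0∞).toReal := by norm_num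
  refine lp.norm_le_of_tsum_le hp (by positivity) ?_
  calc ∑' k, ‖T x k‖ ^ (2 : ℝ≥0∞).toReal
      ≤ ∑' k, M ^ (2 : ℝ≥0∞).toReal * ‖x k‖ ^ (2 : ℝ≥0∞).toReal := by
        refine Summable.tsum_le_tsum (fun k => ?_) ((lp.memℓp (T x)).summable hp)
          (((lp.memℓp x).summable hp).mul_left _)
        rw [apply_of_diagonal hT, norm_mul, Real.mul_rpow (norm_nonneg _) (norm_nonneg _)]
        gcongr
        exact hd k
    _ = (M * ‖x‖) ^ (2 : ℝ≥0∞).toReal := by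
        rw [tsum_mul_left, ← lp.norm_rpow_eq_tsum hp, Real.mul_rpow hM (norm_nonneg _)]

end Diagonal

section Shift

variable {S : L2 →L[ℂ] L2} (hS : ∀ n, S (e n) = e (n + 1))
include hS

lemma adjoint_shift_e_zero : adjoint S (e 0) = 0 :=
  ext_inner_e fun k => by simp [adjoint_inner_right, hS, inner_e_e]

lemma adjoint_shift_e_succ (n : ℕ) : adjoint S (e (n + 1)) = e n :=
  ext_inner_e fun k => by simp [adjoint_inner_right, hS, inner_e_e]

lemma shift_pow_e (m k : ℕ) : (S ^ m) (e k) = e (k + m) := by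
  induction m with
  | zero => simp
  | succ m ih => rw [pow_succ', mul_apply_eq_comp, ih, hS, add_assoc]

lemma adjoint_shift_pow_e (m k : ℕ) :
    (adjoint S ^ m) (e k) = if m ≤ k then e (k - m) else 0 := by
  induction m generalizing k with
  | zero => simp
  | succ m ih =>
    rw [pow_succ, mul_apply_eq_comp]
    cases k with
    | zero => simp [adjoint_shift_e_zero hS]
    | succ j =>
      rw [adjoint_shift_e_succ hS, ih]
      simp only [Nat.add_sub_add_right, Nat.add_le_add_iff_right]

lemma shift_pow_mul_adjoint_pow_e (n k : ℕ) :
    (S ^ (n + 1) * adjoint S ^ (n + 1)) (e k) = (if n + 1 ≤ k then 1 else 0 : ℂ) • e k := by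
  rw [mul_apply_eq_comp, adjoint_shift_pow_e hS]
  split_ifs with h
  · rw [shift_pow_e hS, Nat.sub_add_cancel h, one_smul]
  · rw [map_zero, zero_smul]

lemma norm_shift_pow_mul_adjoint_pow_le (n : ℕ) : ‖S ^ (n + 1) * adjoint S ^ (n + 1)‖ ≤ 1 :=
  norm_le_of_diagonal (shift_pow_mul_adjoint_pow_e hS n) zero_le_one fun k => by
    split_ifs <;> simp

variable {r : ℂ}

lemma summable_pow_smul_shift_pow_mul_adjoint_pow (hr : ‖r‖ < 1) :
    Summable fun n => r ^ n • (S ^ (n + 1) * adjoint S ^ (n + 1)) := by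
  refine .of_norm_bounded (summable_geometric_of_lt_one (norm_nonneg r) hr) fun n => ?_
  rw [norm_smul, norm_pow]
  exact mul_le_of_le_one_right (by positivity) (norm_shift_pow_mul_adjoint_pow_le hS n)

lemma tsum_pow_smul_shift_pow_mul_adjoint_pow_e (hr : ‖r‖ < 1) (k : ℕ) :
    (∑' n, r ^ n • (S ^ (n + 1) * adjoint S ^ (n + 1))) (e k) = (∑ n ∈ range k, r ^ n) • e k := by
  have happly := (apply ℂ L2 (e k)).map_tsum (summable_pow_smul_shift_pow_mul_adjoint_pow hS hr)
  simp only [apply_apply, smul_apply, shift_pow_mul_adjoint_pow_e hS, ite_smul, one_smul,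
    zero_smul, smul_ite, smul_zero] at happly
  rw [happly, tsum_eq_sum (s := range k) fun n hn => if_neg (by simpa using hn), sum_smul]
  exact sum_congr rfl fun n hn => if_pos (by simpa [Nat.succ_le_iff] using hn)

lemma sum_sub_smul_shift_pow_mul_adjoint_pow_e (d : ℕ → ℂ) (N k : ℕ) :
    (∑ n ∈ range N, (d (n + 1) - d n) • (S ^ (n + 1) * adjoint S ^ (n + 1))) (e k)
      = (d (min N k) - d 0) • e k := by
  induction N with
  | zero => simp
  | succ N ih =>
    rw [sum_range_succ, add_apply, ih, smul_apply, shift_pow_mul_adjoint_pow_e hS, smul_smul]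
    split_ifs with h
    · rw [min_eq_left h, min_eq_left (by omega : N ≤ k), ← add_smul]
      congr 1
      ring
    · rw [mul_zero, zero_smul, add_zero, min_eq_right (by omega), min_eq_right (by omega)]

lemma mem_elemental_of_diagonal {T : L2 →L[ℂ] L2} {d : ℕ → ℂ} (hT : ∀ n, T (e n) = d n • e n)
    (hd : CauchySeq d) : T ∈ StarAlgebra.elemental ℂ S := by
  set A : ℕ → L2 →L[ℂ] L2 := fun N =>
    d 0 • 1 + ∑ n ∈ range N, (d (n + 1) - d n) • (S ^ (n + 1) * adjoint S ^ (n + 1))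
  have hA_diag : ∀ N k, (T - A N) (e k) = (d k - d (min N k)) • e k := fun N k => by
    rw [sub_apply, add_apply, smul_apply, one_apply_eq_self,
      sum_sub_smul_shift_pow_mul_adjoint_pow_e hS, hT, ← add_smul, ← sub_smul]
    congr 1
    ring
  have hA_mem : ∀ N, A N ∈ StarAlgebra.elemental ℂ S := by
    have hS_mem := StarAlgebra.elemental.self_mem ℂ S
    have hadj_mem : adjoint S ∈ StarAlgebra.elemental ℂ S := by
      simpa only [star_eq_adjoint] using StarAlgebra.elemental.star_self_mem ℂ S
    exact fun N => add_mem (SMulMemClass.smul_mem _ (one_mem _)) <| sum_mem fun n _ =>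
      SMulMemClass.smul_mem _ (mul_mem (pow_mem hS_mem _) (pow_mem hadj_mem _))
  have hA_lim : Tendsto A atTop (𝓝 T) := by
    refine Metric.tendsto_atTop.mpr fun ε hε => ?_
    obtain ⟨N₀, hN₀⟩ := Metric.cauchySeq_iff.mp hd (ε / 2) (half_pos hε)
    refine ⟨N₀, fun N hN => ?_⟩
    rw [dist_comm, dist_eq_norm]
    refine (norm_le_of_diagonal (hA_diag N) (half_pos hε).le fun k => ?_).trans_lt
      (half_lt_self hε)
    rcases le_total k N with h | h
    · simpa [min_eq_right h] using (half_pos hε).le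
    · rw [min_eq_left h, ← dist_eq_norm]
      exact (hN₀ k (hN.trans h) N hN).le
  exact (StarAlgebra.elemental.isClosed ℂ S).mem_of_tendsto hA_lim (Eventually.of_forall hA_mem)

end Shift

end ShiftDiagonal

open ShiftDiagonal in
/-- C_q² = (1−q²) Σ q^{2n} S^{n+1}(S*)^{n+1}, norm-convergent,
and C_q lies in the C*-algebra generated by S. -/
theorem cq_sq_series (q : ℝ) (hq : 0 < q) (hq1 : q < 1)
    (S Cq : L2 →L[ℂ] L2)
    (hS : ∀ n : ℕ, S (e n) = e (n + 1))
    (hC : ∀ n : ℕ, Cq (e n) = (Real.sqrt (1 - q ^ (2 * n)) : ℂ) • e n) :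
    Summable (fun n : ℕ =>
        ((q : ℂ) ^ (2 * n)) • (S ^ (n + 1) * (ContinuousLinearMap.adjoint S) ^ (n + 1))) ∧
    Cq ∘L Cq = ((1 : ℂ) - (q : ℂ) ^ 2) •
        ∑' n : ℕ, ((q : ℂ) ^ (2 * n)) • (S ^ (n + 1) * (ContinuousLinearMap.adjoint S) ^ (n + 1)) ∧
    Cq ∈ StarAlgebra.elemental ℂ S := by
  have hq2 : q ^ 2 < 1 := pow_lt_one₀ hq.le hq1 two_ne_zero
  have hr : ‖(q : ℂ) ^ 2‖ < 1 := by
    rwa [← Complex.ofReal_pow, Complex.norm_real, Real.norm_of_nonneg (sq_nonneg q)]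
  have hdiag : Tendsto (fun n : ℕ => ((√(1 - q ^ (2 * n)) : ℝ) : ℂ)) atTop (𝓝 1) := by
    have hpow : Tendsto (fun n : ℕ => q ^ (2 * n)) atTop (𝓝 0) := by
      simpa only [pow_mul] using tendsto_pow_atTop_nhds_zero_of_lt_one (sq_nonneg q) hq2
    simpa using ((tendsto_const_nhds (x := (1 : ℝ))).sub hpow).sqrt.ofReal
  simp only [pow_mul]
  refine ⟨summable_pow_smul_shift_pow_mul_adjoint_pow hS hr, ext_e fun k => ?_,
    mem_elemental_of_diagonal hS hC hdiag.cauchySeq⟩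
  have hk : 0 ≤ 1 - q ^ (2 * k) := sub_nonneg.mpr (pow_le_one₀ hq.le hq1.le)
  rw [comp_apply, hC, map_smul, hC, smul_smul, smul_apply,
    tsum_pow_smul_shift_pow_mul_adjoint_pow_e hS hr, smul_smul, mul_neg_geom_sum,
    ← Complex.ofReal_mul, Real.mul_self_sqrt hk]
  push_cast
  rw [pow_mul]
end

section
/- Let q ∈ (0,1) and let A be a unital C*-algebra with element z satisfying z*z = q² z z* + (1−q²)·1. Then ‖z‖ ≤ 1. -/
/-! Taking norms in the relation and using the C*-identity `‖z⋆z‖ = ‖zz⋆‖ = ‖z‖²` gives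
`‖z‖² ≤ q²‖z‖² + (1 - q²)`, i.e. `(1 - q²) ‖z‖² ≤ 1 - q²`. -/

theorem one_sub_norm_mul_norm_sq_le_of_star_mul_self_eq {𝕜 A : Type*} [NormedField 𝕜]
    [NormedRing A] [StarRing A] [CStarRing A] [NormedSpace 𝕜 A] [NormOneClass A]
    {a b : 𝕜} {z : A} (h : star z * z = a • (z * star z) + b • 1) :
    (1 - ‖a‖) * ‖z‖ ^ 2 ≤ ‖b‖ := by
  have hz2 : ‖z‖ ^ 2 ≤ ‖a‖ * ‖z‖ ^ 2 + ‖b‖ :=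
    calc ‖z‖ ^ 2 = ‖star z * z‖ := by rw [CStarRing.norm_star_mul_self, sq]
      _ = ‖a • (z * star z) + b • (1 : A)‖ := by rw [h]
      _ ≤ ‖a • (z * star z)‖ + ‖b • (1 : A)‖ := norm_add_le _ _
      _ = ‖a‖ * ‖z‖ ^ 2 + ‖b‖ := by
        rw [norm_smul, norm_smul, CStarRing.norm_self_mul_star, norm_one, mul_one, sq]
  linarith

theorem norm_le_one_of_qrel_general (q : ℝ) (hq : 0 < q) (hq1 : q < 1)
    {A : Type*} [NormedRing A] [StarRing A] [CStarRing A]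
    [NormedAlgebra ℂ A] [NormOneClass A]
    (z : A) (hz : star z * z = ((q : ℂ) ^ 2) • (z * star z) + ((1 : ℂ) - (q : ℂ) ^ 2) • 1) :
    ‖z‖ ≤ 1 := by
  have hq2 : q ^ 2 < 1 := by nlinarith
  have hbound := one_sub_norm_mul_norm_sq_le_of_star_mul_self_eq hz
  have ha : ‖(q : ℂ) ^ 2‖ = q ^ 2 := by simp
  have hb : ‖(1 : ℂ) - (q : ℂ) ^ 2‖ = 1 - q ^ 2 := by
    rw [← Complex.ofReal_pow, ← Complex.ofReal_one, ← Complex.ofReal_sub, Complex.norm_real,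
      Real.norm_of_nonneg (by linarith)]
  rw [ha, hb] at hbound
  have hz2 : ‖z‖ ^ 2 ≤ 1 := le_of_mul_le_mul_left (by linarith) (sub_pos.mpr hq2)
  exact (sq_le_one_iff₀ (norm_nonneg z)).mp hz2

/-- in a unital C*-algebra, z*z = q² zz* + (1−q²)·1 implies ‖z‖ ≤ 1. -/
theorem norm_le_one_of_qrel (q : ℝ) (hq : 0 < q) (hq1 : q < 1)
    {A : Type*} [NormedRing A] [StarRing A] [CStarRing A] [CompleteSpace A]
    [NormedAlgebra ℂ A] [StarModule ℂ A] [NormOneClass A]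
    (z : A) (hz : star z * z = ((q : ℂ) ^ 2) • (z * star z) + ((1 : ℂ) - (q : ℂ) ^ 2) • 1) :
    ‖z‖ ≤ 1 :=
  norm_le_one_of_qrel_general q hq hq1 z hz
end

section
/- In the C*-algebra C*(S) generated by the unilateral shift S on ℓ²(ℤ₊), for every complex polynomial p one has ‖p(S)‖ = sup_{|λ|=1} |p(λ)|. In particular, the quotient map C*(S) → C*(S)/K(ℓ²(ℤ₊)) ≅ C(𝕋) is isometric on the (non-selfadjoint) algebra of polynomials in S. -/
open Polynomial
open scoped ENNReal lp

theorem Memℓp.comp_equiv {E ι κ : Type*} [NormedAddCommGroup E] {p : ℝ≥0∞}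
    (hp : 0 < p.toReal) (σ : ι ≃ κ) {f : κ → E} (hf : Memℓp f p) : Memℓp (f ∘ σ) p :=
  (memℓp_gen_iff hp).2 <| (σ.summable_iff (f := fun k => ‖f k‖ ^ p.toReal)).2 <|
    (memℓp_gen_iff hp).1 hf

theorem memℓp_geometric {𝕜 : Type*} [NormedDivisionRing 𝕜] {ξ : 𝕜} (hξ : ‖ξ‖ < 1) {p : ℝ≥0∞}
    (hp : 1 ≤ p) : Memℓp (fun n : ℕ => ξ ^ n) p :=
  Memℓp.of_exponent_ge (memℓp_gen (by
    simpa using summable_geometric_of_lt_one (norm_nonneg ξ) hξ)) hp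

namespace lp

section Reindex

variable {𝕜 E ι κ : Type*} [NormedField 𝕜] [NormedAddCommGroup E] [NormedSpace 𝕜 E]
  {p : ℝ≥0∞} [Fact (1 ≤ p)]

noncomputable def reindex (hp : 0 < p.toReal) (σ : ι ≃ κ) :
    lp (fun _ : κ => E) p ≃ₗᵢ[𝕜] lp (fun _ : ι => E) p where
  toFun f := ⟨f ∘ σ, (lp.memℓp f).comp_equiv hp σ⟩
  invFun f := ⟨f ∘ σ.symm, (lp.memℓp f).comp_equiv hp σ.symm⟩
  map_add' _ _ := rfl
  map_smul' _ _ := rfl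
  left_inv f := by ext; simp
  right_inv f := by ext; simp
  norm_map' f := by
    simp only [LinearEquiv.coe_mk, lp.norm_eq_tsum_rpow hp]
    congr 1
    exact σ.tsum_eq (fun k => ‖f k‖ ^ p.toReal)

@[simp]
theorem reindex_apply (hp : 0 < p.toReal) (σ : ι ≃ κ) (f : lp (fun _ : κ => E) p) (i : ι) :
    reindex (𝕜 := 𝕜) hp σ f i = f (σ i) :=
  rfl

theorem reindex_single [DecidableEq ι] [DecidableEq κ] (hp : 0 < p.toReal) (σ : ι ≃ κ)
    (k : κ) (x : E) :
    reindex (𝕜 := 𝕜) hp σ (lp.single p k x) = lp.single p (σ.symm k) x := by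
  ext i
  simp [lp.single_apply, Pi.single_apply, ← Equiv.eq_symm_apply]

end Reindex

section EmbedDomain

variable {𝕜 ι κ : Type*} [RCLike 𝕜]

/-- Extension by zero along an injection of index sets. -/
noncomputable def embedDomain [DecidableEq κ] (g : ι → κ) (hg : g.Injective) :
    ℓ²(ι, 𝕜) →ₗᵢ[𝕜] ℓ²(κ, 𝕜) :=
  ((default : HilbertBasis κ 𝕜 ℓ²(κ, 𝕜)).orthonormal.comp g hg).orthogonalFamily.linearIsometry

theorem embedDomain_single [DecidableEq ι] [DecidableEq κ] (g : ι → κ) (hg : g.Injective)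
    (i : ι) (c : 𝕜) :
    embedDomain g hg (lp.single 2 i c) = lp.single 2 (g i) c := by
  rw [embedDomain, OrthogonalFamily.linearIsometry_apply_single,
    LinearIsometry.toSpanSingleton_apply, Function.comp_apply, ← HilbertBasis.repr_symm_single]
  change c • lp.single (E := fun _ : κ => 𝕜) 2 (g i) 1 = _
  rw [← lp.single_smul, smul_eq_mul, mul_one]

end EmbedDomain

end lp

noncomputable def bilateralShift : unitary (ℓ²(ℤ, ℂ) →L[ℂ] ℓ²(ℤ, ℂ)) :=
  Unitary.linearIsometryEquiv.symm (lp.reindex (by norm_num) (Equiv.subRight 1))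

theorem bilateralShift_single (i : ℤ) :
    (bilateralShift : ℓ²(ℤ, ℂ) →L[ℂ] ℓ²(ℤ, ℂ)) (lp.single 2 i 1) = lp.single 2 (i + 1) 1 := by
  simp [bilateralShift, lp.reindex_single]

section Intertwining

variable {𝕜 E F : Type*} [NontriviallyNormedField 𝕜] [NormedAddCommGroup E] [NormedSpace 𝕜 E]
  [NormedAddCommGroup F] [NormedSpace 𝕜 F] {S : E →L[𝕜] E} {U : F →L[𝕜] F}

theorem map_aeval_apply_of_intertwining {G : Type*} [FunLike G E F] [LinearMapClass G 𝕜 E F]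
    (J : G) (h : ∀ x, J (S x) = U (J x)) (p : 𝕜[X]) (x : E) :
    J (aeval S p x) = aeval U p (J x) := by
  induction p using Polynomial.induction_on generalizing x with
  | C a => simp [Algebra.algebraMap_eq_smul_one]
  | add p q hp hq => simp [hp, hq]
  | monomial n a ih => simpa [pow_succ, ← mul_assoc, h] using ih (S x)

theorem norm_aeval_le_of_intertwining (J : E →ₗᵢ[𝕜] F) (h : ∀ x, J (S x) = U (J x))
    (p : 𝕜[X]) : ‖aeval S p‖ ≤ ‖aeval U p‖ := by
  refine ContinuousLinearMap.opNorm_le_bound _ (norm_nonneg _) fun x => ?_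
  calc ‖aeval S p x‖ = ‖aeval U p (J x)‖ := by
        rw [← J.norm_map, map_aeval_apply_of_intertwining J h]
    _ ≤ ‖aeval U p‖ * ‖J x‖ := (aeval U p).le_opNorm _
    _ = ‖aeval U p‖ * ‖x‖ := by rw [J.norm_map]

end Intertwining

theorem norm_eval_le_iSup_circle (p : ℂ[X]) {z : ℂ} (hz : z ∈ Metric.sphere (0 : ℂ) 1) :
    ‖p.eval z‖ ≤ ⨆ w : Circle, ‖p.eval (w : ℂ)‖ :=
  le_ciSup (f := fun w : Circle => ‖p.eval (w : ℂ)‖)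
    (isCompact_range (by fun_prop)).bddAbove ⟨z, hz⟩

theorem norm_aeval_unitary_le {A : Type*} [CStarAlgebra A] (u : unitary A) (p : ℂ[X]) :
    ‖aeval (u : A) p‖ ≤ ⨆ z : Circle, ‖p.eval (z : ℂ)‖ := by
  rw [← cfc_polynomial p (u : A)]
  exact norm_cfc_le (Real.iSup_nonneg fun _ => norm_nonneg _) fun z hz =>
    norm_eval_le_iSup_circle p (Unitary.spectrum_subset_circle u hz)

theorem norm_eval_le_norm_aeval_of_mem_spectrum {A : Type*} [NormedRing A] [NormedAlgebra ℂ A]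
    [CompleteSpace A] [NormOneClass A] (p : ℂ[X]) {a : A} {z : ℂ} (hz : z ∈ spectrum ℂ a) :
    ‖p.eval z‖ ≤ ‖aeval a p‖ :=
  spectrum.norm_le_norm_of_mem (spectrum.subset_polynomial_aeval a p ⟨z, hz, rfl⟩)

theorem not_isUnit_of_forall_inner_apply_eq_zero {𝕜 H : Type*} [RCLike 𝕜]
    [NormedAddCommGroup H] [InnerProductSpace 𝕜 H] {T : H →L[𝕜] H} {w : H} (hw : w ≠ 0)
    (h : ∀ x, inner 𝕜 w (T x) = 0) : ¬IsUnit T := by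
  rintro ⟨u, rfl⟩
  have hww := h ((↑u⁻¹ : H →L[𝕜] H) w)
  rw [show (u : H →L[𝕜] H) ((↑u⁻¹ : H →L[𝕜] H) w) = w from congr($(u.mul_inv) w),
    inner_self_eq_zero] at hww
  exact hw hww

theorem continuousLinearMap_ext_e {F : Type*} [NormedAddCommGroup F] [NormedSpace ℂ F]
    {T T' : L2 →L[ℂ] F} (h : ∀ n, T (e n) = T' (e n)) : T = T' :=
  lp.ext_continuousLinearMap (by norm_num) fun n => ContinuousLinearMap.ext_ring (h n)

instance : Nontrivial L2 := nontrivial_of_ne (e 0) 0 fun h => by simpa [e] using congr($h 0)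

section UnilateralShift

variable {S : L2 →L[ℂ] L2}

theorem mem_spectrum_of_norm_lt_one (hS : ∀ n, S (e n) = e (n + 1)) {μ : ℂ} (hμ : ‖μ‖ < 1) :
    μ ∈ spectrum ℂ S := by
  let w : L2 := ⟨fun n => (starRingEnd ℂ μ) ^ n,
    memℓp_geometric (by rwa [RCLike.norm_conj]) one_le_two⟩
  have hw : w ≠ 0 := fun h => by simpa [w] using congr($h 0)
  refine not_isUnit_of_forall_inner_apply_eq_zero hw fun x => ?_
  suffices (innerSL ℂ w).comp (algebraMap ℂ _ μ - S) = 0 from congr($this x)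
  refine continuousLinearMap_ext_e fun n => ?_
  have hwe : ∀ k, inner ℂ w (e k) = μ ^ k := fun k => by simp [e, lp.inner_single_right, w]
  simp [Algebra.algebraMap_eq_smul_one, hS, hwe, pow_succ']

theorem sphere_subset_spectrum (hS : ∀ n, S (e n) = e (n + 1)) :
    Metric.sphere (0 : ℂ) 1 ⊆ spectrum ℂ S := by
  refine Metric.sphere_subset_closedBall.trans ?_
  rw [← closure_ball (0 : ℂ) one_ne_zero]
  exact closure_minimal (fun μ hμ => mem_spectrum_of_norm_lt_one hS (mem_ball_zero_iff.1 hμ))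
    (spectrum.isClosed S)

theorem embedDomain_natCast_apply_of_shift (hS : ∀ n, S (e n) = e (n + 1)) (x : L2) :
    lp.embedDomain ((↑) : ℕ → ℤ) Nat.cast_injective (S x) =
      (bilateralShift : ℓ²(ℤ, ℂ) →L[ℂ] ℓ²(ℤ, ℂ))
        (lp.embedDomain ((↑) : ℕ → ℤ) Nat.cast_injective x) := by
  let J := (lp.embedDomain ((↑) : ℕ → ℤ) Nat.cast_injective (𝕜 := ℂ)).toContinuousLinearMap
  suffices J.comp S = (bilateralShift : ℓ²(ℤ, ℂ) →L[ℂ] ℓ²(ℤ, ℂ)).comp J from congr($this x)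
  refine continuousLinearMap_ext_e fun n => ?_
  simp only [J, ContinuousLinearMap.comp_apply, LinearIsometry.coe_toContinuousLinearMap, hS]
  simp [e, lp.embedDomain_single, bilateralShift_single]

end UnilateralShift

/-- for the unilateral shift S, ‖p(S)‖ = sup_{|λ|=1} |p(λ)| for every
complex polynomial p; i.e. the quotient map onto C(𝕋) is isometric on polynomials in S. -/
theorem shift_polynomial_norm
    (S : L2 →L[ℂ] L2) (hS : ∀ n : ℕ, S (e n) = e (n + 1))
    (p : Polynomial ℂ) :
    ‖Polynomial.aeval S p‖ = ⨆ z : Circle, ‖p.eval (z : ℂ)‖ := by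
  refine le_antisymm ?_ (ciSup_le fun z => ?_)
  · calc ‖aeval S p‖ ≤ ‖aeval (bilateralShift : ℓ²(ℤ, ℂ) →L[ℂ] ℓ²(ℤ, ℂ)) p‖ :=
          norm_aeval_le_of_intertwining _ (embedDomain_natCast_apply_of_shift hS) p
      _ ≤ ⨆ z : Circle, ‖p.eval (z : ℂ)‖ := norm_aeval_unitary_le bilateralShift p
  · exact norm_eval_le_norm_aeval_of_mem_spectrum p (sphere_subset_spectrum hS z.2)
end

section
/- Let A be a unital C*-algebra, J a closed two-sided ideal, and suppose there is a subset Z ⊆ A and a central unitary element d of A/J such that every element x + J of A/J can be written as d^{-k}·(a + J) for some k ∈ ℤ₊, where a lies in the (non-closed) subalgebra generated by Z. If I is a closed two-sided ideal with J ⊆ I such that ‖a + I‖ = ‖a + J‖ for all a in the subalgebra generated by Z, then I = J. -/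
/-- abstract Shilov-boundary maximality argument.  Here the quotients
A/J and A/I are realized as surjective *-homomorphisms qJ : A → B and qI : A → C
with ker qJ ⊆ ker qI (i.e. J ⊆ I); `d` is a central unitary of A/J such that every
element of A/J has the form d^{-k}·qJ(a) with a in the subalgebra generated by Z.
If the two quotient norms agree on the subalgebra generated by Z, then I = J
(i.e. the two kernels coincide). -/
theorem boundary_ideal_maximal
    {A B C : Type*}
    [NormedRing A] [StarRing A] [CStarRing A] [CompleteSpace A] [NormedAlgebra ℂ A] [StarModule ℂ A] [NormOneClass A]
    [NormedRing B] [StarRing B] [CStarRing B] [CompleteSpace B] [NormedAlgebra ℂ B] [StarModule ℂ B] [NormOneClass B]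
    [NormedRing C] [StarRing C] [CStarRing C] [CompleteSpace C] [NormedAlgebra ℂ C] [StarModule ℂ C] [NormOneClass C]
    (qJ : A →⋆ₐ[ℂ] B) (qI : A →⋆ₐ[ℂ] C)
    (hqJ : Function.Surjective qJ) (hqI : Function.Surjective qI)
    (hJI : ∀ x : A, qJ x = 0 → qI x = 0)
    (Z : Set A) (d : B)
    (hdu : d ∈ unitary B) (hdc : ∀ b : B, d * b = b * d)
    (hrep : ∀ x : A, ∃ (k : ℕ) (a : A), a ∈ Algebra.adjoin ℂ Z ∧
      qJ x = (star d) ^ k * qJ a)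
    (hnorm : ∀ a ∈ Algebra.adjoin ℂ Z, ‖qI a‖ = ‖qJ a‖) :
    ∀ x : A, qI x = 0 ↔ qJ x = 0 := by
  have key : ∀ x : A, ‖qI x‖ = ‖qJ x‖ := by
    intro x
    obtain ⟨k, a, ha, hx⟩ := hrep x
    obtain ⟨e, he⟩ := hqJ d
    have hstar : qJ (star e) = star d := by rw [map_star, he]
    have hker : qJ (x - (star e) ^ k * a) = 0 := by
      rw [map_sub, map_mul, map_pow, hstar, ← hx, sub_self]
    have hIeq : qI x = qI (star e) ^ k * qI a := by
      have h2 : qI (x - (star e) ^ k * a) = 0 := hJI _ hker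
      rw [map_sub, sub_eq_zero] at h2
      rw [h2, map_mul, map_pow]
    have hse : star d ∈ unitary B := Unitary.star_mem hdu
    have hIe : qI (star e) ∈ unitary C := by
      have h1 : qJ (e * star e - 1) = 0 := by
        rw [map_sub, map_mul, he, hstar, map_one, hdu.2, sub_self]
      have h2 : qJ (star e * e - 1) = 0 := by
        rw [map_sub, map_mul, he, hstar, map_one, hdu.1, sub_self]
      have h1' := hJI _ h1
      have h2' := hJI _ h2
      rw [map_sub, map_mul, map_one, sub_eq_zero] at h1' h2'
      constructor
      · rw [← map_star, star_star]; exact h1'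
      · rw [← map_star, star_star]; exact h2'
    calc ‖qI x‖ = ‖qI (star e) ^ k * qI a‖ := by rw [hIeq]
      _ = ‖qI a‖ := CStarRing.norm_mem_unitary_mul _ (pow_mem hIe k)
      _ = ‖qJ a‖ := hnorm a ha
      _ = ‖(star d) ^ k * qJ a‖ :=
          (CStarRing.norm_mem_unitary_mul _ (pow_mem hse k)).symm
      _ = ‖qJ x‖ := by rw [← hx]
  intro x
  constructor
  · intro h
    have := key x
    rw [h, norm_zero] at this
    exact norm_eq_zero.mp this.symm
  · exact hJI x
end

section
/- For the representation Π of ℂ[SU₂]_q on ℓ²(ℤ₊) given by Π(t₁₁) = S*C_q, Π(t₁₂) = q d(q), Π(t₂₁) = −d(q), Π(t₂₂) = C_q S, the vector e₀ satisfies Π(t₂₂)* e₀ = 0, Π(t₂₁)* e₀ = −e₀, and the vectors Π(t₂₂)^m e₀ (m ∈ ℤ₊) span a dense subspace of ℓ²(ℤ₊); hence Π is a cyclic representation with cyclic vector e₀. -/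
/-! `C_q S` is a weighted shift `e n ↦ √(1 - q^(2(n+1))) e (n+1)` whose weights are nonzero
because `q < 1`, so `(C_q S)^m e₀` is a nonzero multiple of `e m` and these vectors span the
same dense subspace as the standard Hilbert basis. The adjoint identities follow by pairing
with that orthonormal basis. -/

open ContinuousLinearMap Finset

theorem ContinuousLinearMap.pow_apply_zero_of_apply_eq_smul_succ {R M : Type*} [CommSemiring R]
    [TopologicalSpace M] [AddCommMonoid M] [Module R M] {T : M →L[R] M} {a : ℕ → R}
    (v : ℕ → M) (hT : ∀ n, T (v n) = a n • v (n + 1)) (m : ℕ) :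
    (T ^ m) (v 0) = (∏ k ∈ range m, a k) • v m := by
  induction m with
  | zero => simp
  | succ m ih =>
    rw [pow_succ', mul_apply_eq_comp, ih, map_smul, hT, smul_smul, prod_range_succ, mul_comm]

namespace HilbertBasis

variable {ι 𝕜 E F : Type*} [RCLike 𝕜]
  [NormedAddCommGroup E] [InnerProductSpace 𝕜 E]
  [NormedAddCommGroup F] [InnerProductSpace 𝕜 F]

theorem ext_inner_left (b : HilbertBasis ι 𝕜 E) {x y : E}
    (h : ∀ i, inner 𝕜 (b i) x = inner 𝕜 (b i) y) : x = y :=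
  b.repr.injective <| lp.ext <| funext fun i => by
    rw [b.repr_apply_apply, b.repr_apply_apply, h]

theorem adjoint_apply_eq_of_inner [CompleteSpace E] [CompleteSpace F] (b : HilbertBasis ι 𝕜 E)
    {T : E →L[𝕜] F} {v : F} {w : E}
    (h : ∀ i, inner 𝕜 (T (b i)) v = inner 𝕜 (b i) w) : adjoint T v = w :=
  b.ext_inner_left fun i => by rw [adjoint_inner_right, h]

theorem adjoint_apply_of_apply_eq_smul [CompleteSpace E] (b : HilbertBasis ι 𝕜 E)
    {T : E →L[𝕜] E} {a : ι → 𝕜}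
    (hT : ∀ i, T (b i) = a i • b i) (j : ι) :
    adjoint T (b j) = (starRingEnd 𝕜) (a j) • b j := by
  refine b.adjoint_apply_eq_of_inner fun i => ?_
  rw [hT, inner_smul_left, inner_smul_right]
  by_cases hij : i = j
  · rw [hij]
  · rw [b.orthonormal.inner_eq_zero hij, mul_zero, mul_zero]

section WeightedShift

variable (b : HilbertBasis ℕ 𝕜 E) {T : E →L[𝕜] E} {a : ℕ → 𝕜}

theorem adjoint_apply_zero_of_apply_eq_smul_succ [CompleteSpace E]
    (hT : ∀ n, T (b n) = a n • b (n + 1)) :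
    adjoint T (b 0) = 0 :=
  b.adjoint_apply_eq_of_inner fun n => by
    rw [hT, inner_smul_left, b.orthonormal.inner_eq_zero n.succ_ne_zero, inner_zero_right,
      mul_zero]

theorem dense_span_pow_apply_zero_of_apply_eq_smul_succ (hT : ∀ n, T (b n) = a n • b (n + 1))
    (ha : ∀ n, a n ≠ 0) :
    (Submodule.span 𝕜 (Set.range fun m : ℕ => (T ^ m) (b 0))).topologicalClosure = ⊤ := by
  rw [eq_top_iff, ← b.dense_span]
  refine Submodule.topologicalClosure_mono (Submodule.span_le.mpr ?_)
  rintro _ ⟨m, rfl⟩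
  have hprod : ∏ k ∈ range m, a k ≠ 0 := prod_ne_zero_iff.mpr fun k _ => ha k
  have hbm : b m = (∏ k ∈ range m, a k)⁻¹ • (T ^ m) (b 0) := by
    rw [pow_apply_zero_of_apply_eq_smul_succ b hT, smul_smul, inv_mul_cancel₀ hprod, one_smul]
  rw [hbm]
  exact Submodule.smul_mem _ _ (Submodule.subset_span ⟨m, rfl⟩)

end WeightedShift

end HilbertBasis

theorem coe_default_hilbertBasis_l2 : ⇑(default : HilbertBasis ℕ ℂ L2) = e :=
  funext fun n => ((default : HilbertBasis ℕ ℂ L2).repr_symm_single n).symm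

/-- for Π(t₂₂) = C_q S and Π(t₂₁) = −d(q): Π(t₂₂)* e₀ = 0,
Π(t₂₁)* e₀ = −e₀, and the vectors Π(t₂₂)^m e₀ span a dense subspace, so e₀ is a
cyclic vector for Π. -/
theorem su2_rep_cyclic (q : ℝ) (hq : 0 < q) (hq1 : q < 1)
    (S Cq dq : L2 →L[ℂ] L2)
    (hS : ∀ n : ℕ, S (e n) = e (n + 1))
    (hC : ∀ n : ℕ, Cq (e n) = (Real.sqrt (1 - q ^ (2 * n)) : ℂ) • e n)
    (hd : ∀ n : ℕ, dq (e n) = ((q : ℂ) ^ n) • e n) :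
    (ContinuousLinearMap.adjoint (Cq ∘L S)) (e 0) = 0 ∧
    (ContinuousLinearMap.adjoint (-dq)) (e 0) = -(e 0) ∧
    (Submodule.span ℂ (Set.range fun m : ℕ => ((Cq ∘L S) ^ m) (e 0))).topologicalClosure = ⊤ := by
  set b : HilbertBasis ℕ ℂ L2 := default
  have hb : ⇑b = e := coe_default_hilbertBasis_l2
  have hshift :
      ∀ n, (Cq ∘L S) (b n) = (Real.sqrt (1 - q ^ (2 * (n + 1))) : ℂ) • b (n + 1) := by
    simp only [hb, comp_apply, hS, hC, implies_true]
  have hweight : ∀ n : ℕ, (Real.sqrt (1 - q ^ (2 * (n + 1))) : ℂ) ≠ 0 := fun n => by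
    have : q ^ (2 * (n + 1)) < 1 := pow_lt_one₀ hq.le hq1 (by omega)
    exact Complex.ofReal_ne_zero.mpr (Real.sqrt_pos.mpr (by linarith)).ne'
  refine ⟨?_, ?_, ?_⟩
  · simpa only [hb] using b.adjoint_apply_zero_of_apply_eq_smul_succ hshift
  · have hdiag : ∀ n, dq (b n) = ((q : ℂ) ^ n) • b n := by simpa only [hb] using hd
    simpa [hb] using congrArg Neg.neg (b.adjoint_apply_of_apply_eq_smul hdiag 0)
  · simpa only [hb] using b.dense_span_pow_apply_zero_of_apply_eq_smul_succ hshift hweight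
end
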